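/- arXiv:2105.06287 — 2 statements merged into one kernel-verified Lean document; each statement's English description precedes it below -/
import Mathlib

section
/- Let X ⊆ Y be nonempty finite sets of jobs (with sizes in (0, g(m)]), and let h0 := max{m(J) : J ∈ X} and k0 := max{m(J) : J ∈ Y}. Then for every k1 ∈ P(k0) there exists h1 ∈ T(k1) with h0 ∈ A_{h1} (so that h1 ∈ P(h0) and cn^X_{h1} is defined), and for every z0 ∈ T(h1): ∑_{z ∈ T(h1), z ≥ z0} cn^X_{h1}(z)·r(z) ≤ ∑_{z ∈ T(k1), z ≥ z0} cn^Y_{k1}(z)·r(z). -/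
open scoped Classical
open Finset MeasureTheory

namespace BSHM

noncomputable section

/-- The set of candidate parents of machine type `i`: types `j ∈ M` with `j > i`
and a strictly smaller normalized cost rate per capacity unit. -/
def pset (m : ℕ) (g r : ℕ → ℝ) (i : ℕ) : Set ℕ :=
  {j | j ≤ m ∧ i < j ∧ r j / g j < r i / g i}

/-- The parent `p i` of machine type `i` (equal to `0` when the parent is undefined,
since any actual parent has index `≥ 2`). -/
def p (m : ℕ) (g r : ℕ → ℝ) (i : ℕ) : ℕ := sInf (pset m g r i)

/-- `pdef i` asserts that the parent of `i` is defined. -/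
def pdef (m : ℕ) (g r : ℕ → ℝ) (i : ℕ) : Prop := (pset m g r i).Nonempty

/-- One step of the parent relation: `b` is the (defined) parent of `a`. -/
def pstep (m : ℕ) (g r : ℕ → ℝ) (a b : ℕ) : Prop :=
  pdef m g r a ∧ b = p m g r a

/-- `P i`: the set consisting of `i` together with all of its iterated parents. -/
def P (m : ℕ) (g r : ℕ → ℝ) (i : ℕ) : Set ℕ :=
  {z | Relation.ReflTransGen (pstep m g r) i z}

/-- `A i`: the set of nodes in the tree rooted at `i`,
i.e. all `z ∈ M` having `i` as an ancestor (or equal to `i`). -/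
def A (m : ℕ) (g r : ℕ → ℝ) (i : ℕ) : Set ℕ :=
  {z | 1 ≤ z ∧ z ≤ m ∧ i ∈ P m g r z}

/-- `v i`: the lowest-indexed node in the tree rooted at `i`. -/
def v (m : ℕ) (g r : ℕ → ℝ) (i : ℕ) : ℕ := sInf (A m g r i)

/-- `y i`: the younger siblings of `i` (same parent status, smaller index). -/
def y (m : ℕ) (g r : ℕ → ℝ) (i : ℕ) : Set ℕ :=
  {z | 1 ≤ z ∧ z ≤ m ∧ z < i ∧ p m g r z = p m g r i}

/-- `esib i`: the elder siblings of `i`. -/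
def esib (m : ℕ) (g r : ℕ → ℝ) (i : ℕ) : Set ℕ :=
  {z | 1 ≤ z ∧ z ≤ m ∧ i < z ∧ p m g r z = p m g r i}

/-- `T k := {k} ∪ ⋃_{z ∈ P(k)} y(z)`. -/
def T (m : ℕ) (g r : ℕ → ℝ) (k : ℕ) : Set ℕ :=
  {k} ∪ ⋃ z ∈ P m g r k, y m g r z

/-- `T k` as a `Finset` (all relevant nodes lie in `{k} ∪ [1, m]`). -/
def TIcc (m : ℕ) (g r : ℕ → ℝ) (k : ℕ) : Finset ℕ :=
  (insert k (Finset.Icc 1 m)).filter (fun z => z ∈ T m g r k)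

/-! ### Jobs and one-shot scheduling -/

variable {ι : Type*}

/-- The exact machine type of a job `J`: the least `z ∈ M` with `s J ≤ g z`. -/
def mty (m : ℕ) (g : ℕ → ℝ) (s : ι → ℝ) (J : ι) : ℕ :=
  sInf {z | 1 ≤ z ∧ z ≤ m ∧ s J ≤ g z}

/-- Total size of a finite set of jobs. -/
def Ssum (s : ι → ℝ) (W : Finset ι) : ℝ := ∑ J ∈ W, s J

/-- `k0f X`: the highest-indexed exact machine type among the jobs of `X`. -/
def k0f (m : ℕ) (g : ℕ → ℝ) (s : ι → ℝ) (X : Finset ι) : ℕ :=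
  X.sup (fun J => mty m g s J)

/-- `H z X`: the jobs of `X` whose exact machine type lies in the tree rooted at `z`. -/
def H (m : ℕ) (g r : ℕ → ℝ) (s : ι → ℝ) (z : ℕ) (X : Finset ι) : Finset ι :=
  X.filter (fun J => mty m g s J ∈ A m g r z)

/-- `SH X z := S(H_z(X))`. -/
def SH (m : ℕ) (g r : ℕ → ℝ) (s : ι → ℝ) (X : Finset ι) (z : ℕ) : ℝ :=
  Ssum s (H m g r s z X)

/-- Feasibility of a machine configuration `w : M → ℕ` for the job set `X`. -/
def Feasible (m : ℕ) (g : ℕ → ℝ) (s : ι → ℝ) (X : Finset ι) (w : ℕ → ℕ) : Prop :=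
  ∀ i, 1 ≤ i → i ≤ m →
    Ssum s (X.filter (fun J => i ≤ mty m g s J)) ≤ ∑ z ∈ Finset.Icc i m, (w z : ℝ) * g z

/-- The cost of a machine configuration. -/
def cost (m : ℕ) (r : ℕ → ℝ) (w : ℕ → ℕ) : ℝ :=
  ∑ z ∈ Finset.Icc 1 m, (w z : ℝ) * r z

/-- The optimal one-shot scheduling cost for a job set `X`. -/
def OPT1 (m : ℕ) (g r : ℕ → ℝ) (s : ι → ℝ) (X : Finset ι) : ℝ :=
  sInf {c : ℝ | ∃ w : ℕ → ℕ, Feasible m g s X w ∧ c = cost m r w}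

/-- The fractional machine configuration `cn_{z*}` for the job set `X`, with
highest-indexed machine type `zs`.  A node `i ∈ T(zs) \ {zs}` is the boundary
type `i*` exactly when `∑_{z ∈ T(zs), z > i} S(H_z) ≤ cn(zs)·g(zs) <
∑_{z ∈ T(zs), z ≥ i} S(H_z)`; nodes above the boundary get `0`,
nodes below it get `S(H_i)/g_i`. -/
def cn (m : ℕ) (g r : ℕ → ℝ) (s : ι → ℝ) (X : Finset ι) (zs i : ℕ) : ℝ :=
  let B : ℝ := (⌈SH m g r s X zs / g zs⌉₊ : ℝ) * g zs
  let Sge : ℝ := ∑ z ∈ (TIcc m g r zs).filter (fun z => i ≤ z), SH m g r s X z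
  let Sgt : ℝ := ∑ z ∈ (TIcc m g r zs).filter (fun z => i < z), SH m g r s X z
  if i = zs then (⌈SH m g r s X zs / g zs⌉₊ : ℝ)
  else if i ∈ T m g r zs then
    (if Sgt ≤ B ∧ B < Sge then (Sge - B) / g i
     else if B < Sgt then SH m g r s X i / g i
     else 0)
  else 0

/-- `cn_{zs}` is decent: for every strict ancestor `zt` of `zs`, the total cost of
the machines of types in `T(zs) ∩ A(zt)` is at most the cost of one type-`zt` machine. -/
def decent (m : ℕ) (g r : ℕ → ℝ) (s : ι → ℝ) (X : Finset ι) (zs : ℕ) : Prop :=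
  ∀ zt ∈ P m g r zs, zt ≠ zs →
    (∑ z ∈ (TIcc m g r zs).filter (fun z => z ∈ A m g r zt), cn m g r s X zs z * r z) ≤ r zt

/-- `z⋄(X)`: the least `z* ∈ P(k0(X))` such that `cn_{z*}` is decent. -/
def zdia (m : ℕ) (g r : ℕ → ℝ) (s : ι → ℝ) (X : Finset ι) : ℕ :=
  sInf {zs | zs ∈ P m g r (k0f m g s X) ∧ decent m g r s X zs}

/-- The child of `zd` whose subtree contains node `k`. -/
def chil (m : ℕ) (g r : ℕ → ℝ) (zd k : ℕ) : ℕ :=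
  sInf {i | p m g r i = zd ∧ k ∈ A m g r i}

/-- The node `i ∈ T(zd)` whose subtree contains node `k`. -/
def idxT (m : ℕ) (g r : ℕ → ℝ) (zd k : ℕ) : ℕ :=
  sInf {i | i ∈ T m g r zd ∧ k ∈ A m g r i}

/-- The children `f(zd)` of node `zd`, as a `Finset`. -/
def fchFin (m : ℕ) (g r : ℕ → ℝ) (zd : ℕ) : Finset ℕ :=
  (Finset.Icc 1 m).filter (fun z => p m g r z = zd)

/-- The cost `r̃(X)(J)` charged to the job `J` of the job set `X`. -/
def charge (m : ℕ) (g r : ℕ → ℝ) (s : ι → ℝ) (X : Finset ι) (J : ι) : ℝ :=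
  let zd := zdia m g r s X
  let ρ : ℕ → ℝ := fun i => r i / g i
  let Hh := X.filter (fun J' => mty m g s J' = zd)
  let c : ℝ := Ssum s Hh * ρ zd + ∑ i ∈ fchFin m g r zd, SH m g r s X i * ρ i
  if mty m g s J ∈ A m g r zd then
    if g zd ≤ SH m g r s X zd then s J * ρ zd
    else if r zd < c then
      if mty m g s J = zd then s J * ρ zd
      else
        s J * (ρ (chil m g r zd (mty m g s J)) -
          (ρ (chil m g r zd (mty m g s J)) - ρ zd) *
            ((c - r zd) /
              (∑ i ∈ fchFin m g r zd, ∑ J' ∈ H m g r s i X, s J' * (ρ i - ρ zd))))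
    else
      if mty m g s J = zd then s J * ρ zd * (1 + (r zd - c) / (Ssum s Hh * ρ zd))
      else s J * ρ (chil m g r zd (mty m g s J))
  else s J * ρ (idxT m g r zd (mty m g s J))

end

end BSHM

/-!
Write `B_k := ⌈S(H_k)/g(k)⌉·g(k)` for the capacity of the machines of the top type of `cn_k`.
Along `T(k)` the configuration `cn_k` is greedy: the capacity it places on types `≥ w` is
`max(B_k, ∑_{z ∈ T(k), z ≥ w} S(H_z))`. Every type below `k1` has an ancestor in `T(k1)`, which
gives `h1`, and then `T(h1) ⊆ T(k1)`. Each running total for `(X, h1)` is at most the one for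
`(Y, k1)`: the job sums only grow, and if `h1 ≠ k1` then `B_{h1} < S(H_{h1}) + g(h1)`, while a
job of `Y` of the largest type `k0 > h1` alone exceeds `g(h1)`. Since the cost per capacity `r/g` is
nondecreasing along `T(k1)`, Abel summation turns this comparison of capacities into the
comparison of costs.
-/

namespace BSHM

open Relation

lemma sum_filter_le_eq_ite_add {α M : Type*} [LinearOrder α] [AddCommMonoid M] (F : Finset α)
    (f : α → M) (w : α) :
    ∑ z ∈ F with w ≤ z, f z = (if w ∈ F then f w else 0) + ∑ z ∈ F with w < z, f z := by
  rw [sum_filter, sum_filter, ← sum_ite_eq' F w f, ← sum_add_distrib]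
  refine sum_congr rfl fun z _ => ?_
  rcases lt_trichotomy w z with h | rfl | h
  · simp [h.le, h, h.ne']
  · simp
  · simp [h.not_ge, h.not_gt, h.ne]

/-- Abel summation: a nonnegative nondecreasing weight `ρ` is a nonnegative combination of
indicators of suffixes of `S`. -/
lemma sum_mul_le_sum_mul_of_forall_suffix_le {α R : Type*} [LinearOrder α] [CommRing R]
    [LinearOrder R] [IsStrictOrderedRing R] (S : Finset α) {c d ρ : α → R}
    (hρ₀ : ∀ z ∈ S, 0 ≤ ρ z) (hρ : MonotoneOn ρ S)
    (h : ∀ w ∈ S, ∑ z ∈ S with w ≤ z, c z ≤ ∑ z ∈ S with w ≤ z, d z) :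
    ∑ z ∈ S, c z * ρ z ≤ ∑ z ∈ S, d z * ρ z := by
  induction S using Finset.induction_on_min generalizing ρ with
  | empty => simp
  | insert a S ha ih =>
    have haS : a ∉ S := fun h => (ha a h).false
    have hsplit : ∀ e : α → R, ∑ z ∈ insert a S, e z * ρ z
        = ρ a * ∑ z ∈ insert a S, e z + ∑ z ∈ S, e z * (ρ z - ρ a) := by
      intro e
      simp only [sum_insert haS, mul_sub, sum_sub_distrib, mul_add, mul_sum, mul_comm (e _) (ρ a)]
      ring
    have hsuffix : ∀ w ∈ S, (insert a S).filter (w ≤ ·) = S.filter (w ≤ ·) := fun w hw =>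
      by rw [filter_insert, if_neg (ha w hw).not_ge]
    have hall : (insert a S).filter (a ≤ ·) = insert a S :=
      filter_true_of_mem fun z hz => (mem_insert.mp hz).elim ge_of_eq fun hz => (ha z hz).le
    rw [hsplit c, hsplit d]
    refine add_le_add (mul_le_mul_of_nonneg_left ?_ (hρ₀ a (mem_insert_self a S))) (ih ?_ ?_ ?_)
    · simpa only [hall] using h a (mem_insert_self a S)
    · exact fun z hz =>
        sub_nonneg.mpr (hρ (mem_insert_self a S) (mem_insert_of_mem hz) (ha z hz).le)
    · exact fun x hx y hy hxy =>
        sub_le_sub_right (hρ (mem_insert_of_mem hx) (mem_insert_of_mem hy) hxy) _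
    · exact fun w hw => by simpa only [hsuffix w hw] using h w (mem_insert_of_mem hw)

lemma max_eq_ite_boundary {B a t : ℝ} (ha : 0 ≤ a) :
    max B (a + t) - max B t = if t ≤ B ∧ B < a + t then a + t - B else if B < t then a else 0 := by
  split_ifs with h₁ h₂
  · rw [max_eq_right h₁.2.le, max_eq_left h₁.1]
  · rw [max_eq_right (by linarith), max_eq_right h₂.le]
    ring
  · rw [max_eq_left (not_lt.mp fun h => h₁ ⟨not_lt.mp h₂, h⟩), max_eq_left (not_lt.mp h₂), sub_self]

lemma pos_on_Icc_of_increasing {m : ℕ} {f : ℕ → ℝ} (h₁ : 0 < f 1)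
    (hf : ∀ i j, 1 ≤ i → i < j → j ≤ m → f i < f j) : ∀ z ∈ Set.Icc 1 m, 0 < f z := by
  intro z hz
  rcases hz.1.eq_or_lt with rfl | h
  · exact h₁
  · exact h₁.trans (hf 1 z le_rfl h hz.2)

section Tree

variable {m : ℕ} {g r : ℕ → ℝ}

lemma p_mem_pset {i : ℕ} (h : pdef m g r i) : p m g r i ∈ pset m g r i :=
  Nat.sInf_mem h

lemma lt_p {i : ℕ} (h : pdef m g r i) : i < p m g r i :=
  (p_mem_pset h).2.1

lemma p_le {i : ℕ} (h : pdef m g r i) : p m g r i ≤ m :=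
  (p_mem_pset h).1

lemma p_le_of_mem_pset {i j : ℕ} (h : j ∈ pset m g r i) : p m g r i ≤ j :=
  Nat.sInf_le h

lemma p_eq_zero {i : ℕ} (h : ¬ pdef m g r i) : p m g r i = 0 := by
  rw [pdef, Set.not_nonempty_iff_eq_empty] at h
  rw [p, h, Nat.sInf_empty]

lemma pdef_of_p_ne_zero {i : ℕ} (h : p m g r i ≠ 0) : pdef m g r i := by
  by_contra hc
  exact h (p_eq_zero hc)

/-- By minimality of `p c`, no type strictly between `c` and `p c` is cheaper per unit than `c`. -/
lemma p_mem_pset_of_le_of_lt {c z : ℕ} (hc : pdef m g r c) (hcz : c ≤ z)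
    (hzp : z < p m g r c) : p m g r c ∈ pset m g r z := by
  refine ⟨p_le hc, hzp, (p_mem_pset hc).2.2.trans_le ?_⟩
  rcases hcz.eq_or_lt with rfl | hlt
  · exact le_rfl
  · exact not_lt.mp fun hz => (p_le_of_mem_pset ⟨hzp.le.trans (p_le hc), hlt, hz⟩).not_gt hzp

lemma mem_P_self (i : ℕ) : i ∈ P m g r i := ReflTransGen.refl

lemma mem_P_of_mem_P_p {i z : ℕ} (h : pdef m g r i) (hz : z ∈ P m g r (p m g r i)) :
    z ∈ P m g r i :=
  ReflTransGen.head ⟨h, rfl⟩ hz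

lemma le_of_mem_P {i z : ℕ} (h : z ∈ P m g r i) : i ≤ z := by
  induction h with
  | refl => exact le_rfl
  | tail _ hbc ih => exact ih.trans (hbc.2 ▸ (lt_p hbc.1).le)

lemma le_of_mem_P_of_le {i z : ℕ} (him : i ≤ m) (h : z ∈ P m g r i) : z ≤ m := by
  induction h with
  | refl => exact him
  | tail _ hbc _ => exact hbc.2 ▸ p_le hbc.1

lemma lt_of_mem_pset_of_p_eq {z b q : ℕ} (hzb : p m g r z = p m g r b)
    (hq : q ∈ pset m g r z) : b < q := by
  have hz : pdef m g r z := ⟨q, hq⟩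
  have := lt_p hz
  have := p_le_of_mem_pset hq
  by_cases hb : pdef m g r b
  · have := lt_p hb
    omega
  · have := p_eq_zero hb
    omega

/-- Otherwise `z` lies between a node `c` of the chain from `w` to `b` and `p c ≤ b`, which makes
`p c` a candidate parent of `z`. -/
lemma lt_of_mem_P_of_pset_gt {w b z : ℕ} (hb : b ∈ P m g r w)
    (hz : ∀ q ∈ pset m g r z, b < q) (hzb : z < b) : z < w := by
  induction hb with
  | refl => exact hzb
  | @tail c b _ hstep ih =>
    obtain ⟨hc, rfl⟩ := hstep
    refine ih (fun q hq => (lt_p hc).trans (hz q hq)) (not_le.mp fun hcz => ?_)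
    exact (hz _ (p_mem_pset_of_le_of_lt hc hcz hzb)).false

lemma lt_of_mem_y_of_mem_P {z b w : ℕ} (hy : z ∈ y m g r b) (hb : b ∈ P m g r w) : z < w :=
  lt_of_mem_P_of_pset_gt hb (fun _ hq => lt_of_mem_pset_of_p_eq hy.2.2.2 hq) hy.2.2.1

lemma mem_T_iff {k z : ℕ} :
    z ∈ T m g r k ↔ z = k ∨ ∃ b ∈ P m g r k, z ∈ y m g r b := by
  simp [T]

lemma mem_T_self (k : ℕ) : k ∈ T m g r k := Or.inl rfl

lemma lt_of_mem_T_of_ne {k z w : ℕ} (hz : z ∈ T m g r k) (hzk : z ≠ k) (hk : k ∈ P m g r w) :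
    z < w := by
  obtain ⟨b, hb, hy⟩ := (mem_T_iff.mp hz).resolve_left hzk
  exact lt_of_mem_y_of_mem_P hy (ReflTransGen.trans hk hb)

lemma le_of_mem_T {k z : ℕ} (hz : z ∈ T m g r k) : z ≤ k := by
  rcases eq_or_ne z k with rfl | hzk
  · exact le_rfl
  · exact (lt_of_mem_T_of_ne hz hzk (mem_P_self k)).le

lemma mem_Icc_of_mem_T {k z : ℕ} (hz : z ∈ T m g r k) (hk : k ∈ Set.Icc 1 m) :
    z ∈ Set.Icc 1 m := by
  rcases mem_T_iff.mp hz with rfl | ⟨_, _, hy⟩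
  · exact hk
  · exact ⟨hy.1, hy.2.1⟩

lemma T_subset_of_mem {k h : ℕ} (hh : h ∈ T m g r k) : T m g r h ⊆ T m g r k := by
  intro z hz
  rcases mem_T_iff.mp hz with rfl | ⟨b, hbP, hzb⟩
  · exact hh
  rcases mem_T_iff.mp hh with rfl | ⟨a, haP, hha⟩
  · exact hz
  refine mem_T_iff.mpr (Or.inr ?_)
  rcases ReflTransGen.cases_head hbP with rfl | ⟨c, ⟨hd, rfl⟩, hcb⟩
  · exact ⟨a, haP, hzb.1, hzb.2.1, hzb.2.2.1.trans hha.2.2.1, hzb.2.2.2.trans hha.2.2.2⟩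
  · have ha : pdef m g r a := pdef_of_p_ne_zero (by have := lt_p hd; rw [← hha.2.2.2]; omega)
    rw [hha.2.2.2] at hcb
    exact ⟨b, ReflTransGen.trans haP (mem_P_of_mem_P_p ha hcb), hzb⟩

lemma div_le_div_of_mem_T {k z₁ z₂ : ℕ} (hkm : k ≤ m) (h₁ : z₁ ∈ T m g r k)
    (h₂ : z₂ ∈ T m g r k) (h₁₂ : z₁ ≤ z₂) : r z₁ / g z₁ ≤ r z₂ / g z₂ := by
  rcases h₁₂.eq_or_lt with rfl | hlt
  · exact le_rfl
  by_contra! hρ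
  have hz₂k := le_of_mem_T h₂
  rcases mem_T_iff.mp h₁ with rfl | ⟨b, hbP, hy⟩
  · omega
  · have := lt_of_mem_pset_of_p_eq hy.2.2.2 ⟨hz₂k.trans hkm, hlt, hρ⟩
    have := le_of_mem_P hbP
    omega

lemma exists_mem_P_not_pdef (k : ℕ) : ∃ a ∈ P m g r k, ¬ pdef m g r a := by
  by_cases h : pdef m g r k
  · have := lt_p h
    have := p_le h
    obtain ⟨a, ha, hna⟩ := exists_mem_P_not_pdef (p m g r k)
    exact ⟨a, mem_P_of_mem_P_p h ha, hna⟩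
  · exact ⟨k, mem_P_self k, h⟩
termination_by m - k

lemma exists_mem_P_p_eq {w a : ℕ} (hw : pdef m g r w) (hwa : w < a)
    (ha : a < p m g r w) : ∃ b ∈ P m g r a, p m g r b = p m g r w := by
  have hq := p_mem_pset_of_le_of_lt hw hwa.le ha
  have hpa : pdef m g r a := ⟨_, hq⟩
  rcases (p_le_of_mem_pset hq).lt_or_eq with hlt | heq
  · have := lt_p hpa
    obtain ⟨b, hb, hbp⟩ := exists_mem_P_p_eq hw (hwa.trans (lt_p hpa)) hlt
    exact ⟨b, mem_P_of_mem_P_p hpa hb, hbp⟩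
  · exact ⟨a, mem_P_self a, heq⟩
termination_by p m g r w - a

/-- A type `w ≤ k` either climbs to `k` along its ancestors, or an ancestor of `w` is a younger
sibling of an ancestor of `k`. -/
lemma exists_mem_T_mem_A {w k : ℕ} (hw : 1 ≤ w) (hwk : w ≤ k) (hkm : k ≤ m) :
    ∃ z ∈ T m g r k, w ∈ A m g r z := by
  have hwm : w ≤ m := hwk.trans hkm
  rcases hwk.eq_or_lt with rfl | hlt
  · exact ⟨w, mem_T_self w, hw, hkm, mem_P_self w⟩
  by_cases hp : pdef m g r w ∧ p m g r w ≤ k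
  · have := lt_p hp.1
    obtain ⟨z, hzT, hzA⟩ := exists_mem_T_mem_A (hw.trans this.le) hp.2 hkm
    exact ⟨z, hzT, hw, hwm, mem_P_of_mem_P_p hp.1 hzA.2.2⟩
  suffices h : ∃ a ∈ P m g r k, p m g r a = p m g r w by
    obtain ⟨a, haP, hpa⟩ := h
    exact ⟨w, mem_T_iff.mpr (Or.inr ⟨a, haP, hw, hwm, hlt.trans_le (le_of_mem_P haP), hpa.symm⟩),
      hw, hwm, mem_P_self w⟩
  by_cases hpd : pdef m g r w
  · exact exists_mem_P_p_eq hpd hlt (not_le.mp fun h => hp ⟨hpd, h⟩)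
  · obtain ⟨a, haP, hna⟩ := exists_mem_P_not_pdef k
    exact ⟨a, haP, by rw [p_eq_zero hna, p_eq_zero hpd]⟩
termination_by k - w

end Tree

section Configuration

variable {ι : Type*} {m : ℕ} {g r : ℕ → ℝ} {s : ι → ℝ}

lemma mem_TIcc {k z : ℕ} (hk : k ∈ Set.Icc 1 m) : z ∈ TIcc m g r k ↔ z ∈ T m g r k := by
  simp only [TIcc, mem_filter, mem_insert, mem_Icc, and_iff_right_iff_imp]
  exact fun hz => Or.inr (mem_Icc_of_mem_T hz hk)

lemma TIcc_subset_TIcc {k h : ℕ} (hk : k ∈ Set.Icc 1 m) (hh : h ∈ T m g r k) :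
    TIcc m g r h ⊆ TIcc m g r k :=
  fun _ hz => (mem_TIcc hk).mpr (T_subset_of_mem hh (mem_filter.mp hz).2)

lemma mty_mem_Icc {J : ι} (hm : 1 ≤ m) (hJ : s J ≤ g m) : mty m g s J ∈ Set.Icc 1 m :=
  have h := Nat.sInf_mem (⟨m, hm, le_rfl, hJ⟩ : {z | 1 ≤ z ∧ z ≤ m ∧ s J ≤ g z}.Nonempty)
  ⟨h.1, h.2.1⟩

lemma mty_le {J : ι} {z : ℕ} (hz : z ∈ Set.Icc 1 m) (hJ : s J ≤ g z) : mty m g s J ≤ z :=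
  Nat.sInf_le ⟨hz.1, hz.2, hJ⟩

lemma k0f_mem_Icc {X : Finset ι} (hm : 1 ≤ m) (hX : X.Nonempty) (hs : ∀ J ∈ X, s J ≤ g m) :
    k0f m g s X ∈ Set.Icc 1 m := by
  obtain ⟨J, hJ, hmax⟩ := exists_mem_eq_sup X hX (mty m g s)
  rw [k0f, hmax]
  exact mty_mem_Icc hm (hs J hJ)

lemma SH_nonneg {X : Finset ι} (hs : ∀ J ∈ X, 0 ≤ s J) (z : ℕ) : 0 ≤ SH m g r s X z :=
  sum_nonneg fun J hJ => hs J (mem_filter.mp hJ).1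

lemma SH_mono {X Y : Finset ι} (hXY : X ⊆ Y) (hs : ∀ J ∈ Y, 0 ≤ s J) (z : ℕ) :
    SH m g r s X z ≤ SH m g r s Y z :=
  sum_le_sum_of_subset_of_nonneg (filter_subset_filter _ hXY)
    fun J hJ _ => hs J (mem_filter.mp hJ).1

lemma cn_self (X : Finset ι) (k : ℕ) :
    cn m g r s X k k = (⌈SH m g r s X k / g k⌉₊ : ℝ) := by
  simp [cn]

lemma cn_eq_zero_of_notMem_T {X : Finset ι} {k z : ℕ} (hz : z ∉ T m g r k) :
    cn m g r s X k z = 0 := by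
  have hzk : z ≠ k := fun h => hz (h ▸ mem_T_self z)
  simp [cn, hzk, hz]

lemma cn_nonneg {X : Finset ι} (hs : ∀ J ∈ X, 0 ≤ s J) {k z : ℕ} (hg : 0 ≤ g z) :
    0 ≤ cn m g r s X k z := by
  simp only [cn]
  split_ifs with _ _ h
  · positivity
  · exact div_nonneg (sub_nonneg.mpr h.2.le) hg
  · exact div_nonneg (SH_nonneg hs z) hg
  all_goals exact le_rfl

/-- Below the top type, `cn` is the increment of the running total `max B (∑_{z ≥ i} S(H_z))`,
where `B` is the capacity of the machines of the top type. -/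
lemma cn_mul_eq_max_sub_max {X : Finset ι} (hs : ∀ J ∈ X, 0 ≤ s J) {k i : ℕ}
    (hk : k ∈ Set.Icc 1 m) (hi : i ∈ T m g r k) (hik : i ≠ k) (hg : g i ≠ 0) :
    cn m g r s X k i * g i
      = max ((⌈SH m g r s X k / g k⌉₊ : ℝ) * g k)
            (SH m g r s X i + ∑ z ∈ TIcc m g r k with i < z, SH m g r s X z)
        - max ((⌈SH m g r s X k / g k⌉₊ : ℝ) * g k)
            (∑ z ∈ TIcc m g r k with i < z, SH m g r s X z) := by
  rw [max_eq_ite_boundary (SH_nonneg hs i)]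
  have hsplit := sum_filter_le_eq_ite_add (TIcc m g r k) (SH m g r s X) i
  rw [if_pos ((mem_TIcc hk).mpr hi)] at hsplit
  simp only [cn, if_neg hik, if_pos hi, hsplit]
  split_ifs <;> simp [hg]

lemma sum_filter_cn_mul_g_eq_max {X : Finset ι} (hs : ∀ J ∈ X, 0 ≤ s J)
    (hg : ∀ z ∈ Set.Icc 1 m, 0 < g z) {k w : ℕ} (hk : k ∈ Set.Icc 1 m) (hw : w ≤ k) :
    ∑ z ∈ TIcc m g r k with w ≤ z, cn m g r s X k z * g z
      = max ((⌈SH m g r s X k / g k⌉₊ : ℝ) * g k)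
            (∑ z ∈ TIcc m g r k with w ≤ z, SH m g r s X z) := by
  induction hw using Nat.decreasingInduction with
  | self =>
    have htop : (TIcc m g r k).filter (k ≤ ·) = {k} := by
      ext z
      simp only [mem_filter, mem_singleton, mem_TIcc hk]
      exact ⟨fun h => (le_of_mem_T h.1).antisymm h.2, fun h => h ▸ ⟨mem_T_self z, le_rfl⟩⟩
    rw [htop, sum_singleton, sum_singleton, cn_self, max_eq_left]
    exact (div_le_iff₀ (hg k hk)).mp (Nat.le_ceil _)
  | of_succ w hwk ih =>
    rw [sum_filter_le_eq_ite_add, sum_filter_le_eq_ite_add _ (SH m g r s X)]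
    simp only [Nat.lt_iff_add_one_le, ih]
    split_ifs with hw
    · have hwT := (mem_TIcc hk).mp hw
      rw [cn_mul_eq_max_sub_max hs hk hwT hwk.ne (hg w (mem_Icc_of_mem_T hwT hk)).ne']
      simp only [Nat.lt_iff_add_one_le]
      ring
    · simp

end Configuration

section Comparison

variable {ι : Type*} {m : ℕ} {g r : ℕ → ℝ} {s : ι → ℝ}

lemma sum_filter_cn_mul_eq_of_mem_T {X : Finset ι} {k h : ℕ} (hk : k ∈ Set.Icc 1 m)
    (hh : h ∈ T m g r k) (f : ℕ → ℝ) (w : ℕ) :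
    ∑ z ∈ TIcc m g r h with w ≤ z, cn m g r s X h z * f z
      = ∑ z ∈ TIcc m g r k with w ≤ z, cn m g r s X h z * f z := by
  refine sum_subset (filter_subset_filter _ (TIcc_subset_TIcc hk hh)) fun z hz hzh => ?_
  have hz : z ∉ T m g r h := fun hzT =>
    hzh (mem_filter.mpr ⟨(mem_TIcc (mem_Icc_of_mem_T hh hk)).mpr hzT, (mem_filter.mp hz).2⟩)
  rw [cn_eq_zero_of_notMem_T hz, zero_mul]

/-- A job of `Y` of type `k0(Y) > h` does not fit on a machine of type `h`. -/
lemma g_lt_SH_of_mem_T_of_ne {Y : Finset ι} {k h : ℕ} (hm : 1 ≤ m) (hY : Y.Nonempty)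
    (hs₀ : ∀ J ∈ Y, 0 ≤ s J) (hsm : ∀ J ∈ Y, s J ≤ g m) (hk : k ∈ P m g r (k0f m g s Y))
    (hkm : k ∈ Set.Icc 1 m) (hh : h ∈ T m g r k) (hhk : h ≠ k) : g h < SH m g r s Y k := by
  obtain ⟨J, hJY, hJ⟩ := exists_mem_eq_sup Y hY (mty m g s)
  have hJm := mty_mem_Icc hm (hsm J hJY)
  have hlt : h < mty m g s J := hJ ▸ lt_of_mem_T_of_ne hh hhk hk
  calc g h < s J :=
        not_le.mp fun hle => (mty_le (mem_Icc_of_mem_T hh hkm) hle).not_gt hlt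
    _ ≤ SH m g r s Y k :=
      single_le_sum (fun J hJ => hs₀ J (mem_filter.mp hJ).1)
        (mem_filter.mpr ⟨hJY, hJm.1, hJm.2, hJ ▸ hk⟩)

lemma ceil_mul_le_max_sum_SH {X Y : Finset ι} {k h w : ℕ} (hm : 1 ≤ m) (hXY : X ⊆ Y)
    (hY : Y.Nonempty) (hs₀ : ∀ J ∈ Y, 0 ≤ s J) (hsm : ∀ J ∈ Y, s J ≤ g m)
    (hg : ∀ z ∈ Set.Icc 1 m, 0 < g z) (hk : k ∈ P m g r (k0f m g s Y))
    (hkm : k ∈ Set.Icc 1 m) (hh : h ∈ T m g r k) (hwh : w ≤ h) :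
    (⌈SH m g r s X h / g h⌉₊ : ℝ) * g h
      ≤ max ((⌈SH m g r s Y k / g k⌉₊ : ℝ) * g k)
            (∑ z ∈ TIcc m g r k with w ≤ z, SH m g r s Y z) := by
  have hgh := hg h (mem_Icc_of_mem_T hh hkm)
  rcases eq_or_ne h k with rfl | hhk
  · refine le_max_of_le_left (mul_le_mul_of_nonneg_right ?_ hgh.le)
    exact_mod_cast Nat.ceil_mono (div_le_div_of_nonneg_right (SH_mono hXY hs₀ h) hgh.le)
  refine le_max_of_le_right (le_of_lt ?_)
  have hpair : {h, k} ⊆ (TIcc m g r k).filter (w ≤ ·) := by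
    intro z hz
    rcases mem_insert.mp hz with rfl | hz
    · exact mem_filter.mpr ⟨(mem_TIcc hkm).mpr hh, hwh⟩
    · rw [mem_singleton.mp hz]
      exact mem_filter.mpr ⟨(mem_TIcc hkm).mpr (mem_T_self k), hwh.trans (le_of_mem_T hh)⟩
  calc (⌈SH m g r s X h / g h⌉₊ : ℝ) * g h
      < (SH m g r s X h / g h + 1) * g h :=
        mul_lt_mul_of_pos_right (Nat.ceil_lt_add_one (div_nonneg
          (SH_nonneg (fun J hJ => hs₀ J (hXY hJ)) h) hgh.le)) hgh
    _ = SH m g r s X h + g h := by field_simp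
    _ ≤ SH m g r s Y h + SH m g r s Y k :=
        add_le_add (SH_mono hXY hs₀ h) (g_lt_SH_of_mem_T_of_ne hm hY hs₀ hsm hk hkm hh hhk).le
    _ = ∑ z ∈ {h, k}, SH m g r s Y z := (sum_pair hhk).symm
    _ ≤ ∑ z ∈ TIcc m g r k with w ≤ z, SH m g r s Y z :=
        sum_le_sum_of_subset_of_nonneg hpair fun z _ _ => SH_nonneg hs₀ z

lemma sum_filter_cn_mul_g_le {X Y : Finset ι} {k h : ℕ} (hm : 1 ≤ m) (hXY : X ⊆ Y)
    (hY : Y.Nonempty) (hs₀ : ∀ J ∈ Y, 0 ≤ s J) (hsm : ∀ J ∈ Y, s J ≤ g m)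
    (hg : ∀ z ∈ Set.Icc 1 m, 0 < g z) (hk : k ∈ P m g r (k0f m g s Y))
    (hkm : k ∈ Set.Icc 1 m) (hh : h ∈ T m g r k) (w : ℕ) :
    ∑ z ∈ TIcc m g r k with w ≤ z, cn m g r s X h z * g z
      ≤ ∑ z ∈ TIcc m g r k with w ≤ z, cn m g r s Y k z * g z := by
  have hs₀X : ∀ J ∈ X, 0 ≤ s J := fun J hJ => hs₀ J (hXY hJ)
  have hhm := mem_Icc_of_mem_T hh hkm
  rw [← sum_filter_cn_mul_eq_of_mem_T hkm hh]
  rcases le_or_gt w h with hwh | hhw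
  · rw [sum_filter_cn_mul_g_eq_max hs₀X hg hhm hwh,
      sum_filter_cn_mul_g_eq_max hs₀ hg hkm (hwh.trans (le_of_mem_T hh))]
    refine max_le (ceil_mul_le_max_sum_SH hm hXY hY hs₀ hsm hg hk hkm hh hwh)
      (le_max_of_le_right ?_)
    calc ∑ z ∈ TIcc m g r h with w ≤ z, SH m g r s X z
        ≤ ∑ z ∈ TIcc m g r h with w ≤ z, SH m g r s Y z :=
          sum_le_sum fun z _ => SH_mono hXY hs₀ z
      _ ≤ ∑ z ∈ TIcc m g r k with w ≤ z, SH m g r s Y z :=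
          sum_le_sum_of_subset_of_nonneg (filter_subset_filter _ (TIcc_subset_TIcc hkm hh))
            fun z _ _ => SH_nonneg hs₀ z
  · have hempty : (TIcc m g r h).filter (w ≤ ·) = ∅ := filter_false_of_mem fun z hz hwz =>
      (le_of_mem_T (mem_filter.mp hz).2).not_gt (hhw.trans_le hwz)
    rw [hempty, sum_empty]
    refine sum_nonneg fun z hz => mul_nonneg (cn_nonneg hs₀ ?_) ?_ <;>
      exact (hg z (mem_Icc_of_mem_T (mem_filter.mp (mem_filter.mp hz).1).2 hkm)).le

lemma sum_filter_mul_r_le_of_mul_g_le {k : ℕ} {c d : ℕ → ℝ} (hkm : k ∈ Set.Icc 1 m)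
    (hg : ∀ z ∈ Set.Icc 1 m, 0 < g z) (hr : ∀ z ∈ Set.Icc 1 m, 0 < r z)
    (hcd : ∀ w, ∑ z ∈ TIcc m g r k with w ≤ z, c z * g z
      ≤ ∑ z ∈ TIcc m g r k with w ≤ z, d z * g z) (z₀ : ℕ) :
    ∑ z ∈ TIcc m g r k with z₀ ≤ z, c z * r z ≤ ∑ z ∈ TIcc m g r k with z₀ ≤ z, d z * r z := by
  set S := (TIcc m g r k).filter (z₀ ≤ ·)
  have hT : ∀ z ∈ S, z ∈ T m g r k := fun z hz => (mem_filter.mp (mem_filter.mp hz).1).2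
  have hg' : ∀ z ∈ S, 0 < g z := fun z hz => hg z (mem_Icc_of_mem_T (hT z hz) hkm)
  have hweight : ∀ e : ℕ → ℝ, ∑ z ∈ S, e z * r z = ∑ z ∈ S, e z * g z * (r z / g z) :=
    fun e => sum_congr rfl fun z hz => by field_simp [(hg' z hz).ne']
  rw [hweight c, hweight d]
  refine sum_mul_le_sum_mul_of_forall_suffix_le S
    (fun z hz => div_nonneg (hr z (mem_Icc_of_mem_T (hT z hz) hkm)).le (hg' z hz).le)
    (fun x hx y hy hxy => div_le_div_of_mem_T hkm.2 (hT x hx) (hT y hy) hxy) fun w hw => ?_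
  have hS : S.filter (w ≤ ·) = (TIcc m g r k).filter (w ≤ ·) := by
    rw [filter_filter]
    exact filter_congr fun z _ => ⟨And.right, fun hwz => ⟨(mem_filter.mp hw).2.trans hwz, hwz⟩⟩
  rw [hS]
  exact hcd w

end Comparison

/-- Let `X ⊆ Y` be nonempty finite sets of jobs with sizes in
`(0, g m]`, `h0 := max{m(J) : J ∈ X}` and `k0 := max{m(J) : J ∈ Y}`.  Then for
every `k1 ∈ P(k0)` there exists `h1 ∈ T(k1)` with `h0 ∈ A(h1)`, and for every
`z0 ∈ T(h1)`:
`∑_{z ∈ T(h1), z ≥ z0} cn^X_{h1}(z)·r z ≤ ∑_{z ∈ T(k1), z ≥ z0} cn^Y_{k1}(z)·r z`. -/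
theorem statement_14 {ι : Type*} (m : ℕ) (g r : ℕ → ℝ) (s : ι → ℝ)
    (X Y : Finset ι)
    (hm : 1 ≤ m)
    (hg1 : 0 < g 1) (hr1 : 0 < r 1)
    (hg : ∀ i j, 1 ≤ i → i < j → j ≤ m → g i < g j)
    (hr : ∀ i j, 1 ≤ i → i < j → j ≤ m → r i < r j)
    (hXY : X ⊆ Y) (hX : X.Nonempty) (hY : Y.Nonempty)
    (hs : ∀ J ∈ Y, 0 < s J ∧ s J ≤ g m) :
    ∀ k1 ∈ P m g r (k0f m g s Y),
      ∃ h1 ∈ T m g r k1, k0f m g s X ∈ A m g r h1 ∧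
        ∀ z0 ∈ T m g r h1,
          (∑ z ∈ (TIcc m g r h1).filter (fun z => z0 ≤ z),
              cn m g r s X h1 z * r z)
            ≤ ∑ z ∈ (TIcc m g r k1).filter (fun z => z0 ≤ z),
                cn m g r s Y k1 z * r z := by
  intro k1 hk1
  have hs₀ : ∀ J ∈ Y, 0 ≤ s J := fun J hJ => (hs J hJ).1.le
  have hsm : ∀ J ∈ Y, s J ≤ g m := fun J hJ => (hs J hJ).2
  have hgpos := pos_on_Icc_of_increasing hg1 hg
  have hrpos := pos_on_Icc_of_increasing hr1 hr
  have hk0Y := k0f_mem_Icc hm hY hsm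
  have hk1m : k1 ∈ Set.Icc 1 m := ⟨hk0Y.1.trans (le_of_mem_P hk1), le_of_mem_P_of_le hk0Y.2 hk1⟩
  obtain ⟨h1, hh1T, hh1A⟩ := exists_mem_T_mem_A
    (k0f_mem_Icc hm hX fun J hJ => hsm J (hXY hJ)).1
    ((sup_mono hXY).trans (le_of_mem_P hk1)) hk1m.2
  refine ⟨h1, hh1T, hh1A, fun z0 _ => ?_⟩
  rw [sum_filter_cn_mul_eq_of_mem_T hk1m hh1T]
  exact sum_filter_mul_r_le_of_mul_g_le hk1m hgpos hrpos
    (sum_filter_cn_mul_g_le hm hXY hY hs₀ hsm hgpos hk1 hk1m hh1T) z0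

end BSHM
end

section
/- There exists a constant C > 0 such that the following holds for every instance: for every m, g, r as in the setup, every nonempty finite job set 𝒥 with sizes in (0, g(m)] and active-interval lengths in [1, μ] (μ ≥ 1), and every d ≥ μ, one has ∫_{t ∈ span(𝒥)} OPT1(𝒥(t) ∪ ℋ(t)) dt ≤ C · d · ∫_{t ∈ span(𝒥)} OPT1(𝒥(t)) dt (both integrands are piecewise constant with finitely many pieces, so the integrals are well defined). -/
open scoped Classical
open Finset MeasureTheory

namespace BSHM

noncomputable section

/-! ### Jobs and one-shot scheduling -/

variable {ι : Type*}

/-! ### Jobs with active intervals -/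

/-- `span(X) := ⋃_{J ∈ X} [Ilo J, Ihi J)`. -/
def spanSet (Ilo Ihi : ι → ℝ) (X : Finset ι) : Set ℝ :=
  ⋃ J ∈ X, Set.Ico (Ilo J) (Ihi J)

/-- `X(t)`: the jobs of `X` active at time `t`. -/
def activeJ (Ilo Ihi : ι → ℝ) (X : Finset ι) (t : ℝ) : Finset ι :=
  X.filter (fun J => Ilo J ≤ t ∧ t < Ihi J)

/-- `X(t) ∪ ℋ(t)` where `ℋ = {F_d(J) : J ∈ X}`: the original jobs are embedded
via `Sum.inl`, and the artificial job `F_d(J)` (with size `s J` and active set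
`[Ihi J, Ihi J + d) ∩ span(X)`) is represented by `Sum.inr J`. -/
def activeJH (Ilo Ihi : ι → ℝ) (X : Finset ι) (d t : ℝ) : Finset (ι ⊕ ι) :=
  (X.image Sum.inl ∪ X.image Sum.inr).filter
    (fun x => Sum.elim
      (fun J => Ilo J ≤ t ∧ t < Ihi J)
      (fun J => (Ihi J ≤ t ∧ t < Ihi J + d) ∧ t ∈ spanSet Ilo Ihi X) x)

end

end BSHM

/-!
Every job of `ℋ(t)` is a job `J` whose interval ended at most `d` before `t`; since `J` is active
for at least one time unit, it is active at one of the integer shifts `t - c` with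
`1 ≤ c ≤ ⌈d⌉`. Optimal one-shot cost is subadditive (add up the machine configurations), so
`OPT1(𝒥(t) ∪ ℋ(t)) ≤ ∑_{c=0}^{⌈d⌉} OPT1(𝒥(t - c))`, and integrating over `span(𝒥)` with
translation invariance of Lebesgue measure gives the bound with `C = 3`.
-/

theorem Finset.sum_biUnion_le_sum_sum {α ι : Type*} [DecidableEq ι] (idx : Finset α)
    (X : α → Finset ι) {f : ι → ℝ} (hf : ∀ J ∈ idx.biUnion X, 0 ≤ f J) :
    ∑ J ∈ idx.biUnion X, f J ≤ ∑ k ∈ idx, ∑ J ∈ X k, f J := by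
  have himage : idx.biUnion X = (idx.sigma X).image Sigma.snd := by
    ext J; simp
  calc ∑ J ∈ idx.biUnion X, f J = ∑ J ∈ (idx.sigma X).image Sigma.snd, f J := by rw [himage]
    _ ≤ ∑ x ∈ idx.sigma X, f x.2 := sum_image_le_of_nonneg (himage ▸ hf)
    _ = _ := sum_sigma _ _ _

namespace BSHM

section Load

variable {ι ι' α : Type*} {m : ℕ} {g : ℕ → ℝ}

noncomputable def load (m : ℕ) (g : ℕ → ℝ) (s : ι → ℝ) (X : Finset ι) (i : ℕ) : ℝ :=
  Ssum s (X.filter (fun J => i ≤ mty m g s J))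

lemma load_eq_sum_ite (s : ι → ℝ) (X : Finset ι) (i : ℕ) :
    load m g s X i = ∑ J ∈ X, if i ≤ mty m g s J then s J else 0 :=
  sum_filter _ _

lemma load_disjSum (s : ι → ℝ) (s' : ι' → ℝ) (X : Finset ι) (Y : Finset ι') (i : ℕ) :
    load m g (Sum.elim s s') (X.disjSum Y) i = load m g s X i + load m g s' Y i := by
  simp only [load_eq_sum_ite, sum_disjSum]
  rfl

lemma load_mono {s : ι → ℝ} {X Y : Finset ι} (hXY : X ⊆ Y) (hs : ∀ J ∈ Y, 0 ≤ s J) (i : ℕ) :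
    load m g s X i ≤ load m g s Y i :=
  sum_le_sum_of_subset_of_nonneg (filter_subset_filter _ hXY)
    fun J hJ _ => hs J (mem_filter.1 hJ).1

lemma load_biUnion_le {s : ι → ℝ} (idx : Finset α) (X : α → Finset ι)
    (hs : ∀ J ∈ idx.biUnion X, 0 ≤ s J) (i : ℕ) :
    load m g s (idx.biUnion X) i ≤ ∑ k ∈ idx, load m g s (X k) i := by
  simp only [load_eq_sum_ite]
  refine sum_biUnion_le_sum_sum idx X fun J hJ => ?_
  split_ifs
  exacts [hs J hJ, le_rfl]

end Load

section OneShot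

variable {ι κ α : Type*} {m : ℕ} {g r : ℕ → ℝ}

lemma pos_of_mem_Icc_of_increasing {f : ℕ → ℝ} (h1 : 0 < f 1)
    (hf : ∀ i j, 1 ≤ i → i < j → j ≤ m → f i < f j) {z : ℕ} (hz : z ∈ Finset.Icc 1 m) :
    0 < f z := by
  obtain ⟨h1z, hzm⟩ := mem_Icc.1 hz
  rcases h1z.eq_or_lt with rfl | hlt
  · exact h1
  · exact h1.trans (hf 1 z le_rfl hlt hzm)

lemma cost_nonneg (hr : ∀ z ∈ Finset.Icc 1 m, 0 ≤ r z) (w : ℕ → ℕ) : 0 ≤ cost m r w :=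
  sum_nonneg fun z hz => mul_nonneg (Nat.cast_nonneg _) (hr z hz)

lemma OPT1_nonneg (hr : ∀ z ∈ Finset.Icc 1 m, 0 ≤ r z) (s : ι → ℝ) (X : Finset ι) :
    0 ≤ OPT1 m g r s X :=
  Real.sInf_nonneg (by rintro c ⟨w, -, rfl⟩; exact cost_nonneg hr w)

lemma OPT1_le_cost (hr : ∀ z ∈ Finset.Icc 1 m, 0 ≤ r z) {s : ι → ℝ} {X : Finset ι}
    {w : ℕ → ℕ} (hw : Feasible m g s X w) : OPT1 m g r s X ≤ cost m r w :=
  csInf_le ⟨0, by rintro c ⟨w, -, rfl⟩; exact cost_nonneg hr w⟩ ⟨w, hw, rfl⟩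

lemma OPT1_empty (hr : ∀ z ∈ Finset.Icc 1 m, 0 ≤ r z) (s : ι → ℝ) :
    OPT1 m g r s (∅ : Finset ι) = 0 := by
  refine le_antisymm ?_ (OPT1_nonneg hr s ∅)
  calc OPT1 m g r s ∅ ≤ cost m r 0 := OPT1_le_cost hr (w := 0) fun i _ _ => by simp [Ssum]
    _ = 0 := by simp [cost]

/-- Everything fits on `⌈S(X)/g(m)⌉` machines of the largest type. -/
lemma exists_feasible (hg : 0 < g m) {s : ι → ℝ} {X : Finset ι} (hs : ∀ J ∈ X, 0 ≤ s J) :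
    ∃ w, Feasible m g s X w := by
  refine ⟨fun z => if z = m then ⌈Ssum s X / g m⌉₊ else 0, fun i _ him => ?_⟩
  rw [sum_eq_single_of_mem m (mem_Icc.2 ⟨him, le_rfl⟩)
    (fun z _ hz => by simp [hz])]
  calc Ssum s (X.filter _) ≤ Ssum s X :=
        sum_le_sum_of_subset_of_nonneg (filter_subset _ _)
          fun J hJ _ => hs J hJ
    _ = Ssum s X / g m * g m := by field_simp
    _ ≤ _ := by simpa using mul_le_mul_of_nonneg_right (Nat.le_ceil _) hg.le

lemma exists_feasible_cost_lt (hg : 0 < g m) {s : ι → ℝ} {X : Finset ι}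
    (hs : ∀ J ∈ X, 0 ≤ s J) {δ : ℝ} (hδ : 0 < δ) :
    ∃ w, Feasible m g s X w ∧ cost m r w < OPT1 m g r s X + δ := by
  obtain ⟨w, hw⟩ := exists_feasible hg hs
  have hne : {c : ℝ | ∃ w, Feasible m g s X w ∧ c = cost m r w}.Nonempty := ⟨_, w, hw, rfl⟩
  obtain ⟨_, ⟨w, hw, rfl⟩, hlt⟩ :=
    exists_lt_of_csInf_lt hne (lt_add_of_pos_right (OPT1 m g r s X) hδ)
  exact ⟨w, hw, hlt⟩

lemma feasible_sum {sZ : κ → ℝ} {Z : Finset κ} {s : ι → ℝ} {idx : Finset α}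
    {X : α → Finset ι} {w : α → ℕ → ℕ} (hw : ∀ k ∈ idx, Feasible m g s (X k) (w k))
    (hload : ∀ i, 1 ≤ i → i ≤ m → load m g sZ Z i ≤ ∑ k ∈ idx, load m g s (X k) i) :
    Feasible m g sZ Z (fun z => ∑ k ∈ idx, w k z) := by
  intro i hi him
  calc load m g sZ Z i ≤ ∑ k ∈ idx, load m g s (X k) i := hload i hi him
    _ ≤ ∑ k ∈ idx, ∑ z ∈ Finset.Icc i m, (w k z : ℝ) * g z :=
        sum_le_sum fun k hk => hw k hk i hi him
    _ = _ := by
        rw [sum_comm]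
        simp only [Nat.cast_sum, sum_mul]

lemma cost_sum (idx : Finset α) (w : α → ℕ → ℕ) :
    cost m r (fun z => ∑ k ∈ idx, w k z) = ∑ k ∈ idx, cost m r (w k) := by
  simp only [cost, Nat.cast_sum, sum_mul]
  exact sum_comm

/-- Subadditivity of `OPT1`, phrased through loads so that the job sets may live in
different types and the pieces may overlap. -/
lemma OPT1_le_sum_of_load_le (hg : 0 < g m) (hr : ∀ z ∈ Finset.Icc 1 m, 0 ≤ r z)
    {sZ : κ → ℝ} {Z : Finset κ} {s : ι → ℝ} {idx : Finset α} {X : α → Finset ι}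
    (hs : ∀ k ∈ idx, ∀ J ∈ X k, 0 ≤ s J)
    (hload : ∀ i, 1 ≤ i → i ≤ m → load m g sZ Z i ≤ ∑ k ∈ idx, load m g s (X k) i) :
    OPT1 m g r sZ Z ≤ ∑ k ∈ idx, OPT1 m g r s (X k) := by
  refine le_of_forall_pos_le_add fun ε hε => ?_
  have hδ : 0 < ε / (idx.card + 1) := by positivity
  have hnear : ∀ k ∈ idx, ∃ w, Feasible m g s (X k) w ∧
      cost m r w < OPT1 m g r s (X k) + ε / (idx.card + 1) :=
    fun k hk => exists_feasible_cost_lt hg (hs k hk) hδ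
  choose! w hw hcost using hnear
  calc OPT1 m g r sZ Z ≤ ∑ k ∈ idx, cost m r (w k) := by
        rw [← cost_sum]; exact OPT1_le_cost hr (feasible_sum hw hload)
    _ ≤ ∑ k ∈ idx, (OPT1 m g r s (X k) + ε / (idx.card + 1)) :=
        sum_le_sum fun k hk => (hcost k hk).le
    _ ≤ ∑ k ∈ idx, OPT1 m g r s (X k) + ε := by
        rw [sum_add_distrib, sum_const, nsmul_eq_mul]
        gcongr
        rw [mul_div_assoc', div_le_iff₀ (by positivity)]
        linarith

end OneShot

section Intervals

variable {ι : Type*} {m : ℕ} {g r : ℕ → ℝ} {s Ilo Ihi : ι → ℝ} {X : Finset ι} {d : ℝ}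

lemma activeJH_eq_disjSum (t : ℝ) :
    activeJH Ilo Ihi X d t = (activeJ Ilo Ihi X t).disjSum
      (X.filter fun J => (Ihi J ≤ t ∧ t < Ihi J + d) ∧ t ∈ spanSet Ilo Ihi X) := by
  ext (J | J) <;> simp [activeJH, activeJ]

/-- A job active for at least one time unit that ended within `d` before `t` was active at
the integer shift `t - (⌊t - Ihi J⌋ + 1)`. -/
lemma filter_subset_biUnion_activeJ (hlen : ∀ J ∈ X, 1 ≤ Ihi J - Ilo J) (t : ℝ) :
    (X.filter fun J => (Ihi J ≤ t ∧ t < Ihi J + d) ∧ t ∈ spanSet Ilo Ihi X) ⊆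
      (range ⌈d⌉₊).biUnion fun c => activeJ Ilo Ihi X (t - (c + 1 : ℕ)) := by
  intro J hJ
  obtain ⟨hJX, ⟨hended, hrecent⟩, -⟩ := mem_filter.1 hJ
  have hlag : 0 ≤ t - Ihi J := by linarith
  have hfloor_le := Nat.floor_le hlag
  have hlt_floor := Nat.lt_floor_add_one (t - Ihi J)
  have hfloor_lt : ⌊t - Ihi J⌋₊ < ⌈d⌉₊ := by
    exact_mod_cast hfloor_le.trans_lt ((by linarith : t - Ihi J < d).trans_le (Nat.le_ceil d))
  refine mem_biUnion.2 ⟨⌊t - Ihi J⌋₊, mem_range.2 hfloor_lt, ?_⟩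
  refine mem_filter.2 ⟨hJX, ?_, ?_⟩ <;> push_cast <;> linarith [hlen J hJX]

lemma OPT1_activeJH_le_sum (hg : 0 < g m) (hr : ∀ z ∈ Finset.Icc 1 m, 0 ≤ r z)
    (hs : ∀ J ∈ X, 0 ≤ s J) (hlen : ∀ J ∈ X, 1 ≤ Ihi J - Ilo J) (t : ℝ) :
    OPT1 m g r (Sum.elim s s) (activeJH Ilo Ihi X d t) ≤
      ∑ c ∈ range (⌈d⌉₊ + 1), OPT1 m g r s (activeJ Ilo Ihi X (t - c)) := by
  have hs_active : ∀ t', ∀ J ∈ activeJ Ilo Ihi X t', 0 ≤ s J :=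
    fun t' J hJ => hs J (mem_filter.1 hJ).1
  have hs_shifted : ∀ J ∈ (range ⌈d⌉₊).biUnion
      (fun c => activeJ Ilo Ihi X (t - (c + 1 : ℕ))), 0 ≤ s J := fun J hJ => by
    obtain ⟨c, -, hJc⟩ := mem_biUnion.1 hJ
    exact hs_active _ J hJc
  refine OPT1_le_sum_of_load_le hg hr (fun c _ => hs_active _) fun i _ _ => ?_
  rw [activeJH_eq_disjSum, load_disjSum, sum_range_succ', Nat.cast_zero, sub_zero,
    add_comm]
  gcongr
  calc _ ≤ load m g s ((range ⌈d⌉₊).biUnion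
          fun c => activeJ Ilo Ihi X (t - (c + 1 : ℕ))) i :=
        load_mono (filter_subset_biUnion_activeJ hlen t) hs_shifted i
    _ ≤ _ := load_biUnion_le _ _ hs_shifted i

lemma OPT1_activeJ_eq_zero_of_notMem (hr : ∀ z ∈ Finset.Icc 1 m, 0 ≤ r z) {t : ℝ}
    (ht : t ∉ spanSet Ilo Ihi X) : OPT1 m g r s (activeJ Ilo Ihi X t) = 0 := by
  have hempty : activeJ Ilo Ihi X t = ∅ :=
    filter_eq_empty_iff.2 fun J hJ hactive => ht (Set.mem_biUnion hJ hactive)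
  rw [hempty, OPT1_empty hr]

end Intervals

section Integration

variable {α κ E : Type*} [MeasurableSpace α] [NormedAddCommGroup E]

lemma measurableSet_filter_mem_eq (U : Finset κ) {A : κ → Set α}
    (hA : ∀ x ∈ U, MeasurableSet (A x)) (W : Finset κ) :
    MeasurableSet {t | U.filter (fun x => t ∈ A x) = W} := by
  by_cases hWU : W ⊆ U
  · have hlevel : {t | U.filter (fun x => t ∈ A x) = W} =
        ⋂ x ∈ (U : Set κ), {t | t ∈ A x ↔ x ∈ W} := by
      ext t
      simp only [Set.mem_ofPred_eq, Set.mem_iInter, mem_coe, Finset.ext_iff,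
        mem_filter]
      exact ⟨fun h x hx => by simpa [hx] using h x, fun h x =>
        ⟨fun hx => (h x hx.1).1 hx.2, fun hx => ⟨hWU hx, (h x (hWU hx)).2 hx⟩⟩⟩
    rw [hlevel]
    refine MeasurableSet.biInter U.countable_toSet fun x hx => ?_
    by_cases hxW : x ∈ W
    · rw [show {t | t ∈ A x ↔ x ∈ W} = A x by ext; simp [hxW]]
      exact hA x hx
    · rw [show {t | t ∈ A x ↔ x ∈ W} = (A x)ᶜ by ext; simp [hxW]]
      exact (hA x hx).compl
  · convert MeasurableSet.empty
    exact Set.eq_empty_of_forall_notMem fun t ht => hWU (ht ▸ filter_subset _ _)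

/-- A function of the set of active indices is a finite combination of indicators of the
level sets. -/
lemma integrable_apply_filter_mem {μ : Measure α} (U : Finset κ) {A : κ → Set α}
    (hA : ∀ x ∈ U, MeasurableSet (A x)) (hAμ : ∀ x ∈ U, μ (A x) < ⊤)
    (φ : Finset κ → E) (hφ : φ ∅ = 0) :
    Integrable (fun t => φ (U.filter fun x => t ∈ A x)) μ := by
  have hsum : (fun t => φ (U.filter fun x => t ∈ A x)) = fun t =>
      ∑ W ∈ U.powerset, {t | U.filter (fun x => t ∈ A x) = W}.indicator (fun _ => φ W) t := by
    funext t
    rw [sum_eq_single_of_mem (f := fun W =>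
      {t' : α | U.filter (fun x => t' ∈ A x) = W}.indicator (fun _ => φ W) t)
      (U.filter fun x => t ∈ A x) (mem_powerset.2 (filter_subset _ _))]
    · exact (Set.indicator_of_mem rfl _).symm
    · exact fun W _ hW => Set.indicator_of_notMem (Ne.symm hW) _
  rw [hsum]
  refine integrable_finsetSum _ fun W hW => ?_
  obtain rfl | ⟨x, hxW⟩ := W.eq_empty_or_nonempty
  · simp [hφ]
  have hxU : x ∈ U := mem_powerset.1 hW hxW
  have hlevel_sub : {t | U.filter (fun x => t ∈ A x) = W} ⊆ A x := by
    intro t (ht : U.filter _ = W)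
    rw [← ht] at hxW
    exact (mem_filter.1 hxW).2
  refine (integrable_indicator_iff (measurableSet_filter_mem_eq U hA W)).2 ?_
  exact integrableOn_const ((measure_mono hlevel_sub).trans_lt (hAμ x hxU)).ne

lemma setIntegral_comp_sub_le {G : Type*} [MeasurableSpace G] [AddGroup G] [MeasurableAdd G]
    {μ : Measure G} [μ.IsAddRightInvariant] {f : G → ℝ} (hf : Integrable f μ) (hf0 : 0 ≤ f)
    {S : Set G} (hfS : ∀ x ∉ S, f x = 0) (c : G) :
    ∫ x in S, f (x - c) ∂μ ≤ ∫ x in S, f x ∂μ :=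
  calc ∫ x in S, f (x - c) ∂μ ≤ ∫ x, f (x - c) ∂μ :=
        setIntegral_le_integral (hf.comp_sub_right c) (ae_of_all _ fun x => hf0 (x - c))
    _ = ∫ x, f x ∂μ := integral_sub_right_eq_self f c
    _ = ∫ x in S, f x ∂μ := (setIntegral_eq_integral_of_forall_compl_eq_zero hfS).symm

end Integration

lemma integrable_OPT1_activeJ {ι : Type*} {m : ℕ} {g r : ℕ → ℝ}
    (hr : ∀ z ∈ Finset.Icc 1 m, 0 ≤ r z) (s Ilo Ihi : ι → ℝ) (X : Finset ι) :
    Integrable fun t => OPT1 m g r s (activeJ Ilo Ihi X t) := by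
  simpa [activeJ] using integrable_apply_filter_mem (μ := volume) X
    (A := fun J => Set.Ico (Ilo J) (Ihi J)) (fun _ _ => measurableSet_Ico)
    (fun _ _ => measure_Ico_lt_top) (OPT1 m g r s) (OPT1_empty hr s)

/-- There exists a constant `C > 0` such that, for every
instance (machine types with power-of-8 cost rates, nonempty finite job set with
sizes in `(0, g m]` and active-interval lengths in `[1, μ]`, and any `d ≥ μ`):
`∫_{t ∈ span(𝒥)} OPT1(𝒥(t) ∪ ℋ(t)) dt ≤ C·d·∫_{t ∈ span(𝒥)} OPT1(𝒥(t)) dt`. -/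
theorem statement_17 :
    ∃ C : ℝ, 0 < C ∧
      ∀ (m : ℕ) (g r : ℕ → ℝ),
        1 ≤ m → 0 < g 1 → 0 < r 1 →
        (∀ i j, 1 ≤ i → i < j → j ≤ m → g i < g j) →
        (∀ i j, 1 ≤ i → i < j → j ≤ m → r i < r j) →
        (∀ z, 1 ≤ z → z ≤ m → ∃ n : ℤ, r z = (8 : ℝ) ^ n) →
        ∀ (ι : Type) (s Ilo Ihi : ι → ℝ) (𝒥 : Finset ι) (μ d : ℝ),
          𝒥.Nonempty →
          (∀ J ∈ 𝒥, 0 < s J ∧ s J ≤ g m) →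
          1 ≤ μ →
          (∀ J ∈ 𝒥, 1 ≤ Ihi J - Ilo J ∧ Ihi J - Ilo J ≤ μ) →
          μ ≤ d →
          (∫ t in spanSet Ilo Ihi 𝒥,
              OPT1 m g r (Sum.elim s s) (activeJH Ilo Ihi 𝒥 d t))
            ≤ C * d *
              ∫ t in spanSet Ilo Ihi 𝒥, OPT1 m g r s (activeJ Ilo Ihi 𝒥 t) := by
  refine ⟨3, by norm_num, ?_⟩
  intro m g r hm hg1 hr1 hg_mono hr_mono _ ι s Ilo Ihi 𝒥 μ d _ hs hμ hlen hμd
  have hgm : 0 < g m := pos_of_mem_Icc_of_increasing hg1 hg_mono (mem_Icc.2 ⟨hm, le_rfl⟩)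
  have hr : ∀ z ∈ Finset.Icc 1 m, 0 ≤ r z :=
    fun z hz => (pos_of_mem_Icc_of_increasing hr1 hr_mono hz).le
  have hs0 : ∀ J ∈ 𝒥, 0 ≤ s J := fun J hJ => (hs J hJ).1.le
  set F := fun t => OPT1 m g r s (activeJ Ilo Ihi 𝒥 t)
  have hF : Integrable F := integrable_OPT1_activeJ hr s Ilo Ihi 𝒥
  have hF_shift : ∀ c : ℝ, Integrable fun t => F (t - c) := hF.comp_sub_right
  have hshifts : (⌈d⌉₊ + 1 : ℝ) ≤ 3 * d := by
    linarith [Nat.ceil_lt_add_one (zero_le_one.trans (hμ.trans hμd))]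
  calc _ ≤ ∫ t in spanSet Ilo Ihi 𝒥, ∑ c ∈ range (⌈d⌉₊ + 1), F (t - c) :=
        integral_mono_of_nonneg (ae_of_all _ fun t => OPT1_nonneg hr _ _)
          (integrable_finsetSum _ fun (c : ℕ) _ => hF_shift c).integrableOn
          (ae_of_all _ (OPT1_activeJH_le_sum hgm hr hs0 fun J hJ => (hlen J hJ).1))
    _ = ∑ c ∈ range (⌈d⌉₊ + 1), ∫ t in spanSet Ilo Ihi 𝒥, F (t - c) :=
        integral_finsetSum _ fun c _ => (hF_shift c).integrableOn
    _ ≤ ∑ c ∈ range (⌈d⌉₊ + 1), ∫ t in spanSet Ilo Ihi 𝒥, F t :=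
        sum_le_sum fun c _ => setIntegral_comp_sub_le hF (fun t => OPT1_nonneg hr s _)
          (fun t ht => OPT1_activeJ_eq_zero_of_notMem hr ht) c
    _ = (⌈d⌉₊ + 1 : ℝ) * ∫ t in spanSet Ilo Ihi 𝒥, F t := by simp
    _ ≤ 3 * d * ∫ t in spanSet Ilo Ihi 𝒥, F t :=
        mul_le_mul_of_nonneg_right hshifts
          (setIntegral_nonneg_of_ae (ae_of_all _ fun t => OPT1_nonneg hr s _))

end BSHM
end
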